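/- arXiv:1303.6976 — 4 statements merged into one kernel-verified Lean document; each statement's English description precedes it below -/
import Mathlib

section
/- Let P, Q : [0,2]×[0,2] → 2^{[0,2]} be defined by P(x₁,x₂) = (1,x₂] if x₁ ∈ [0,1] and x₂ ∈ (1,2], and P(x₁,x₂) = ∅ otherwise; and Q(x₁,x₂) = [min(x₁,x₂), max(x₁,x₂)]. Then the pair (P,Q) has property T: for each (x₁,x₂), P(x₁,x₂) ⊆ Q(x₁,x₂), and y ∈ P(x₁,x₂) implies Q(y,x₂) ⊆ P(x₁,x₂). -/
/-- With `P(x₁,x₂) = (1,x₂]` if `x₁ ∈ [0,1]` and `x₂ ∈ (1,2]`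
(else `∅`), and `Q(x₁,x₂) = [min(x₁,x₂), max(x₁,x₂)]`, the pair `(P,Q)` has
property T. -/
theorem stmt_3 (P Q : ℝ × ℝ → Set ℝ)
    (hP : ∀ x : ℝ × ℝ, P x =
      if x.1 ∈ Set.Icc (0:ℝ) 1 ∧ x.2 ∈ Set.Ioc (1:ℝ) 2 then Set.Ioc 1 x.2 else ∅)
    (hQ : ∀ x : ℝ × ℝ, Q x = Set.Icc (min x.1 x.2) (max x.1 x.2)) :
    ∀ x ∈ Set.Icc (0:ℝ) 2 ×ˢ Set.Icc (0:ℝ) 2,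
      P x ⊆ Q x ∧ ∀ y ∈ P x, Q (y, x.2) ⊆ P x := by
  intro x _
  rw [hP x, hQ x]
  by_cases h : x.1 ∈ Set.Icc (0:ℝ) 1 ∧ x.2 ∈ Set.Ioc (1:ℝ) 2
  · simp only [if_pos h]
    obtain ⟨⟨h0, h1⟩, h2, h3⟩ := h
    constructor
    · intro z hz
      constructor
      · exact le_trans (min_le_left _ _) (le_of_lt (lt_of_le_of_lt h1 hz.1))
      · exact le_trans hz.2 (le_max_right _ _)
    · intro y hy z hz
      rw [hQ (y, x.2)] at hz
      simp only at hz
      have hy1 : (1:ℝ) < y := hy.1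
      have hyx : y ≤ x.2 := hy.2
      rw [min_eq_left hyx, max_eq_right hyx] at hz
      exact ⟨lt_of_lt_of_le hy1 hz.1, hz.2⟩
  · simp only [if_neg h]
    exact ⟨Set.empty_subset _, fun y hy => absurd hy (Set.notMem_empty y)⟩
end

section
/- Let G ↣* H be a reduction realized by a sequence of parings R^t with R⁰ = G, each step R^t ↣ R^{t+1} fast (with respect to the dominance relation y_i ≻_{R^t} x_i meaning R^t_{-i} ≠ ∅ and y_i ∈ ⋂_{x_{-i} ∈ R^t_{-i}} P_i(x_i, x_{-i})), and H_i = ⋂_t R^t_i; and let G ⇒* H' be a reduction realized by a sequence R'^t with R'⁰ = G, each step fast with respect to dominance by strategies inside the current restriction (i.e., x_i is eliminated iff ⋂_{x_{-i} ∈ R'^t_{-i}} P_i(x_i, x_{-i}) ∩ R'^t_i ≠ ∅), and H'_i = ⋂_t R'^t_i. If all H_i and H'_i are nonempty, then H_i ⊆ H'_i for each i. Moreover, R^t_i ⊆ R'^t_i for every t and i. -/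
/-- The set `⋂_{x_{-i} ∈ R_{-i}} P_i(x_i, x_{-i})` of common dominators of
strategy `xi` of player `i` relative to the paring `R`. -/
def domSet {I : Type*} [DecidableEq I] {X : I → Type*}
    (P : ∀ i, (∀ j, X j) → Set (X i)) (R : ∀ i, Set (X i)) (i : I) (xi : X i) :
    Set (X i) :=
  ⋂ x ∈ {x : ∀ j, X j | ∀ j, j ≠ i → x j ∈ R j}, P i (Function.update x i xi)

/-- `xi` is strictly dominated relative to `R` (the `↣`-dominance `≻_R`):
`R_{-i} ≠ ∅` and some `y_i` lies in all `P_i(x_i, x_{-i})`, `x_{-i} ∈ R_{-i}`. -/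
def dominated {I : Type*} [DecidableEq I] {X : I → Type*}
    (P : ∀ i, (∀ j, X j) → Set (X i)) (R : ∀ i, Set (X i)) (i : I) (xi : X i) :
    Prop :=
  (∃ x : ∀ j, X j, ∀ j, j ≠ i → x j ∈ R j) ∧ (domSet P R i xi).Nonempty

/-- If `G ↣* H` via the fast sequence `R^t` and `G ⇒* H'` via the
fast sequence `R'^t`, and all `H_i`, `H'_i` are nonempty, then `H_i ⊆ H'_i`;
moreover `R^t_i ⊆ R'^t_i` for all `t`, `i`. -/
theorem stmt_5 {I : Type*} [DecidableEq I] {X : I → Type*}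
    (P : ∀ i, (∀ j, X j) → Set (X i))
    (R R' : ℕ → ∀ i, Set (X i))
    (hR0 : ∀ i, R 0 i = Set.univ) (hR'0 : ∀ i, R' 0 i = Set.univ)
    (hR : ∀ t i, R (t + 1) i = {xi ∈ R t i | ¬ dominated P (R t) i xi})
    (hR' : ∀ t i, R' (t + 1) i =
      {xi ∈ R' t i | ¬ (domSet P (R' t) i xi ∩ R' t i).Nonempty})
    (H H' : ∀ i, Set (X i))
    (hH : ∀ i, H i = ⋂ t, R t i) (hH' : ∀ i, H' i = ⋂ t, R' t i)
    (hne : ∀ i, (H i).Nonempty) (hne' : ∀ i, (H' i).Nonempty) :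
    (∀ i, H i ⊆ H' i) ∧ ∀ t i, R t i ⊆ R' t i := by
  have hmono : ∀ t i, R t i ⊆ R' t i := by
    intro t
    induction t with
    | zero => intro i; rw [hR0, hR'0]
    | succ t ih =>
      intro i xi hxi
      rw [hR] at hxi
      rw [hR']
      obtain ⟨hx1, hx2⟩ := hxi
      refine ⟨ih i hx1, ?_⟩
      rintro ⟨y, hy1, _⟩
      apply hx2
      constructor
      · have hRne : ∀ j, (R t j).Nonempty := fun j => by
          obtain ⟨z, hz⟩ := hne j
          exact ⟨z, by rw [hH] at hz; exact Set.mem_iInter.1 hz t⟩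
        choose f hf using hRne
        exact ⟨f, fun j _ => hf j⟩
      · refine ⟨y, ?_⟩
        simp only [domSet, Set.mem_iInter, Set.mem_setOf_eq] at hy1 ⊢
        intro x hx
        exact hy1 x (fun j hj => ih j (hx j hj))
  refine ⟨?_, hmono⟩
  intro i xi hxi
  rw [hH']
  rw [hH] at hxi
  exact Set.mem_iInter.2 fun t => hmono t i (Set.mem_iInter.1 hxi t)
end

section
/- For each stage t of a reduction sequence (R^t) of a qualitative game G with decreasing restrictions R^{t+1} ⊆ R^t, Condition C(t) implies Condition D(t): if every strategy x_i ∈ G_i that is strictly dominated relative to R^t (i.e., R^t_{-i} ≠ ∅ and there is y_i ∈ ⋂_{x_{-i} ∈ R^t_{-i}} P_i(x_i,x_{-i})) admits a dominator x_i* ∈ G_i with x_i* ∈ ⋂_{x_{-i} ∈ R^t_{-i}} P_i(x_i,x_{-i}) and ⋂_{x_{-i} ∈ R^t_{-i}} P_i(x_i*,x_{-i}) = ∅, then every such strictly dominated x_i has a dominator inside R^t_i, i.e., ⋂_{x_{-i} ∈ R^t_{-i}} P_i(x_i,x_{-i}) ∩ R^t_i ≠ ∅. -/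
/-- For a decreasing reduction sequence `(R^t)` with `R⁰ = G` in
which undominated strategies are never eliminated, Condition `C(t)` (every
strictly dominated strategy has an undominated dominator in `G_i`) implies
Condition `D(t)` (every strictly dominated strategy has a dominator in `R^t_i`). -/
theorem stmt_6 {I : Type*} [DecidableEq I] {X : I → Type*}
    (P : ∀ i, (∀ j, X j) → Set (X i))
    (R : ℕ → ∀ i, Set (X i))
    (hR0 : ∀ i, R 0 i = Set.univ)
    (hdec : ∀ t i, R (t + 1) i ⊆ R t i)
    (hsurv : ∀ t i xi, xi ∈ R t i → ¬ dominated P (R t) i xi → xi ∈ R (t + 1) i)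
    (t : ℕ)
    (hC : ∀ i (xi : X i), dominated P (R t) i xi →
      ∃ xs : X i, xs ∈ domSet P (R t) i xi ∧ domSet P (R t) i xs = ∅) :
    ∀ i (xi : X i), dominated P (R t) i xi →
      (domSet P (R t) i xi ∩ R t i).Nonempty := by
  intro i xi hdom
  obtain ⟨xs, hxs, hempty⟩ := hC i xi hdom
  refine ⟨xs, hxs, ?_⟩
  have hmono : ∀ j, ∀ {a b : ℕ}, a ≤ b → R b j ⊆ R a j := by
    intro j a b h
    induction h with
    | refl => exact subset_rfl
    | step h ih => exact (hdec _ j).trans ih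
  have key : ∀ s, s ≤ t → xs ∈ R s i := by
    intro s
    induction s with
    | zero => intro _; rw [hR0]; trivial
    | succ n ih =>
      intro hs
      have hn : n ≤ t := le_of_lt (Nat.lt_of_succ_le hs)
      apply hsurv n i xs (ih hn)
      rintro ⟨-, y, hy⟩
      have : y ∈ domSet P (R t) i xs := by
        simp only [domSet, Set.mem_iInter, Set.mem_setOf_eq] at hy ⊢
        intro x hx
        exact hy x (fun j hj => hmono j hn (hx j hj))
      rw [hempty] at this
      exact this
  exact key t le_rfl
end

section
/- In Example 1 of Dufwenberg–Stegeman (two players, G₁ = G₂ = [0,1], u_i(x,y) = x for x < 1, u_i(1,y) = 0 for y < 1, u_i(1,1) = 1), for any fixed x ∈ [0,1), the restriction with H₁ = H₂ = {1, x} cannot be further →-reduced: no strategy in H_i is strictly dominated relative to H, i.e., for each z ∈ {1,x} and each player i, ⋂_{w ∈ H_{-i}} P_i(z, w) ∩ H_i = ∅, where P_i is the induced preference correspondence P_i(x,y) = {z : u_i evaluated with z in player i's slot exceeds u_i(x,y)}. -/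
/-- In Example 1 of Dufwenberg–Stegeman (strategy sets `[0,1]`,
utility `u(a,b) = a` if `a < 1`, `u(1,b) = 0` if `b < 1`, `u(1,1) = 1`,
symmetric between the players), for any fixed `x ∈ [0,1)` the restriction
`H₁ = H₂ = {1, x}` cannot be `→`-reduced: for each `z ∈ {1,x}` and each player,
`(⋂_{w ∈ H} P_i(z,w)) ∩ H = ∅`, where `P_i` is the induced preference
correspondence. -/
theorem stmt_9 (u : ℝ × ℝ → ℝ)
    (hu : ∀ p : ℝ × ℝ, u p = if p.1 < 1 then p.1 else if p.2 < 1 then 0 else 1)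
    (P1 P2 : ℝ × ℝ → Set ℝ)
    -- induced preferences: player 1's utility is `u`, player 2's is `u ∘ swap`
    (hP1 : ∀ p : ℝ × ℝ, P1 p = {z ∈ Set.Icc (0:ℝ) 1 | u p < u (z, p.2)})
    (hP2 : ∀ p : ℝ × ℝ, P2 p = {z ∈ Set.Icc (0:ℝ) 1 | u (p.2, p.1) < u (z, p.1)}) :
    ∀ x ∈ Set.Ico (0:ℝ) 1, ∀ z ∈ ({1, x} : Set ℝ),
      (⋂ w ∈ ({1, x} : Set ℝ), P1 (z, w)) ∩ ({1, x} : Set ℝ) = ∅ ∧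
      (⋂ w ∈ ({1, x} : Set ℝ), P2 (w, z)) ∩ ({1, x} : Set ℝ) = ∅ := by
  intro x hx z hz
  obtain ⟨hx0, hx1⟩ := hx
  -- key utility values
  have hu11 : u (1, 1) = 1 := by rw [hu]; norm_num
  have hu1x : u (1, x) = 0 := by rw [hu]; simp [hx1, not_lt.mpr (le_refl (1:ℝ))]
  have huxw : ∀ w : ℝ, u (x, w) = x := by intro w; rw [hu]; simp [hx1]
  have hle1 : ∀ a b : ℝ, a ≤ 1 → u (a, b) ≤ 1 := by
    intro a b ha
    rw [hu]
    dsimp only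
    split_ifs <;> norm_num [ha]
  constructor
  · rw [Set.eq_empty_iff_forall_notMem]
    rintro y ⟨hyI, hyH⟩
    simp only [Set.mem_iInter] at hyI
    have h1 := hyI 1 (by simp)
    have h2 := hyI x (by simp)
    rw [hP1] at h1 h2
    obtain ⟨⟨hy0, hy1⟩, hlt1⟩ := h1
    obtain ⟨_, hlt2⟩ := h2
    rcases hz with hz | hz <;> subst hz
    · -- z = 1 : u(1,1)=1 < u(y,1) ≤ 1, impossible
      simp only [hu11] at hlt1
      exact absurd (hle1 y 1 hy1) (not_le.mpr hlt1)
    · -- z = x : u(x,x)=x < u(y,x) with y ∈ {1,x}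
      simp only [huxw] at hlt2
      rcases hyH with hy | hy <;> subst hy
      · rw [hu1x] at hlt2; linarith
      · rw [huxw] at hlt2; exact lt_irrefl _ hlt2
  · rw [Set.eq_empty_iff_forall_notMem]
    rintro y ⟨hyI, hyH⟩
    simp only [Set.mem_iInter] at hyI
    have h1 := hyI 1 (by simp)
    have h2 := hyI x (by simp)
    rw [hP2] at h1 h2
    obtain ⟨⟨hy0, hy1⟩, hlt1⟩ := h1
    obtain ⟨_, hlt2⟩ := h2
    rcases hz with hz | hz <;> subst hz
    · simp only [hu11] at hlt1
      exact absurd (hle1 y 1 hy1) (not_le.mpr hlt1)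
    · simp only [huxw] at hlt2
      rcases hyH with hy | hy <;> subst hy
      · rw [hu1x] at hlt2; linarith
      · rw [huxw] at hlt2; exact lt_irrefl _ hlt2
end
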